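/- With notation as before, if n − k ≤ k, then the injective map Δ_{n,k} : Gal(L(M[p^n])/L(M[p^k])) → (M[p^{n−k}])^m, Δ(σ) = (σ(x_i) ⊖ x_i)_i, is a group homomorphism. -/

import Mathlib

/-!
If `f` fixes the `a`-torsion pointwise and `(a * b) • y = 0`, then `f` commutes with `b •` and
fixes `b • y`, so `b • (f y - y) = f (b • y) - b • y = 0`. With `a = p ^ k`, `b = p ^ (n - k)`
this puts `Δ(σ)` in `M[p^(n-k)] ⊆ M[p^k]`, a subgroup that `σ` fixes; hence
`σ (τ x) - σ x = τ x - x`, which is the cocycle identity without its twisting term.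
-/

section FixedTorsion

variable {M F : Type*} [AddCommGroup M] [FunLike F M M] [AddMonoidHomClass F M M]

theorem nsmul_map_sub_self_eq_zero {f : F} {a b : ℕ} (hf : ∀ z : M, a • z = 0 → f z = z)
    {y : M} (hy : (a * b) • y = 0) : b • (f y - y) = 0 := by
  have hfix : f (b • y) = b • y := hf _ (by rwa [smul_smul])
  rw [smul_sub, ← map_nsmul, hfix, sub_self]

theorem map_comp_sub_self {f g : F} {a : ℕ} (hg : ∀ z : M, a • z = 0 → g z = z) {y : M}
    (hy : a • (f y - y) = 0) : g (f y) - y = (g y - y) + (f y - y) := by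
  have hfix : g (f y) - g y = f y - y := by rw [← map_sub, hg _ hy]
  linear_combination (norm := abel) hfix

end FixedTorsion

theorem stmt4_general (L L' : Type) [Field L] [Field L'] [Algebra L L']
    (M : Type) [AddCommGroup M]
    (act : (L' ≃ₐ[L] L') →* Multiplicative (AddAut M))
    (p n k m : ℕ) (hkn : k ≤ n) (hnk : n - k ≤ k)
    (x : Fin m → M) (hx : ∀ i, (p ^ n : ℕ) • x i = 0)
    (σ τ : L' ≃ₐ[L] L')
    (hσ : ∀ y : M, (p ^ k : ℕ) • y = 0 → Multiplicative.toAdd (act σ) y = y)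
    (hτ : ∀ y : M, (p ^ k : ℕ) • y = 0 → Multiplicative.toAdd (act τ) y = y) :
    (∀ i, (p ^ (n - k) : ℕ) • (Multiplicative.toAdd (act σ) (x i) - x i) = 0) ∧
    (∀ i, Multiplicative.toAdd (act (σ * τ)) (x i) - x i =
      (Multiplicative.toAdd (act σ) (x i) - x i) + (Multiplicative.toAdd (act τ) (x i) - x i)) := by
  have hx' : ∀ i, (p ^ k * p ^ (n - k)) • x i = 0 := by
    simpa only [← pow_add, Nat.add_sub_cancel' hkn] using hx
  refine ⟨fun i => nsmul_map_sub_self_eq_zero hσ (hx' i), fun i => ?_⟩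
  have hτx : (p ^ k : ℕ) • (Multiplicative.toAdd (act τ) (x i) - x i) = 0 := by
    obtain ⟨c, hc⟩ := pow_dvd_pow p hnk
    rw [hc, mul_nsmul, nsmul_map_sub_self_eq_zero hτ (hx' i), smul_zero]
  rw [map_mul]
  exact map_comp_sub_self hσ hτx

/-- With `M` the module of `p`-power torsion points of a formal group over the
ring of integers of `L` inside `L'` (realized by `ι : M → L'` and a Galois action `act`
compatible with `ι`), `x₁, …, x_m ∈ M[pⁿ]`, and `σ, τ` elements of `Gal(L'/L)` fixing
`M[p^k]` pointwise: if `n − k ≤ k`, then the differences `Δ(σ)ᵢ = σ(xᵢ) ⊖ xᵢ` lie in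
`M[p^{n−k}]` and `Δ` is a group homomorphism, i.e. `Δ(στ)ᵢ = Δ(σ)ᵢ + Δ(τ)ᵢ`. -/
theorem stmt4 (L L' : Type) [Field L] [Field L'] [Algebra L L']
    (M : Type) [AddCommGroup M] (ι : M → L') (hι : Function.Injective ι)
    (act : (L' ≃ₐ[L] L') →* Multiplicative (AddAut M))
    (hact : ∀ σ x, ι (Multiplicative.toAdd (act σ) x) = σ (ι x))
    (p n k m : ℕ) (hp : p.Prime) (hkn : k ≤ n) (hnk : n - k ≤ k)
    (x : Fin m → M) (hx : ∀ i, (p ^ n : ℕ) • x i = 0)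
    (σ τ : L' ≃ₐ[L] L')
    (hσ : ∀ y : M, (p ^ k : ℕ) • y = 0 → Multiplicative.toAdd (act σ) y = y)
    (hτ : ∀ y : M, (p ^ k : ℕ) • y = 0 → Multiplicative.toAdd (act τ) y = y) :
    (∀ i, (p ^ (n - k) : ℕ) • (Multiplicative.toAdd (act σ) (x i) - x i) = 0) ∧
    (∀ i, Multiplicative.toAdd (act (σ * τ)) (x i) - x i =
      (Multiplicative.toAdd (act σ) (x i) - x i) + (Multiplicative.toAdd (act τ) (x i) - x i)) :=
  stmt4_general L L' M act p n k m hkn hnk x hx σ τ hσ hτ
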